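/- arXiv:2604.00645 — 4 statements merged into one kernel-verified Lean document; each statement's English description precedes it below -/
import Mathlib

section
/- If a smooth positive solution u of the heat equation on (0,∞) × ℝ^d satisfies the differential Harnack inequality ∂ₜ(log u) ≥ |∇(log u)|² − d/(2t), then for all 0 < t₁ < t₂ and x₁, x₂ ∈ ℝ^d one has the Harnack estimate u(t₁,x₁) ≤ u(t₂,x₂) (t₂/t₁)^{d/2} exp(|x₁ − x₂|²/(4(t₂ − t₁))). -/
noncomputable def lap {d : ℕ} (f : EuclideanSpace ℝ (Fin d) → ℝ)
    (x : EuclideanSpace ℝ (Fin d)) : ℝ :=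
  ∑ i : Fin d,
    fderiv ℝ (fun y => fderiv ℝ f y (EuclideanSpace.single i 1)) x (EuclideanSpace.single i 1)

/-- A smooth positive solution of the heat equation satisfying the differential Harnack
inequality `∂ₜ(log u) ≥ |∇(log u)|² - d/(2t)` satisfies the Harnack estimate
`u(t₁,x₁) ≤ u(t₂,x₂) (t₂/t₁)^{d/2} exp(|x₁-x₂|²/(4(t₂-t₁)))` for `0 < t₁ < t₂`. -/
theorem harnack_from_differential_harnack {d : ℕ}
    (u : ℝ → EuclideanSpace ℝ (Fin d) → ℝ)
    (hsmooth : ∀ t > (0 : ℝ), ∀ x, ContDiffAt ℝ (⊤ : ℕ∞) (Function.uncurry u) (t, x))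
    (hpos : ∀ t > (0 : ℝ), ∀ x, 0 < u t x)
    (hheat : ∀ t > (0 : ℝ), ∀ x, HasDerivAt (fun s => u s x) (lap (u t) x) t)
    (hLY : ∀ t > (0 : ℝ), ∀ x,
      deriv (fun s => Real.log (u s x)) t
        ≥ ‖gradient (fun y => Real.log (u t y)) x‖ ^ 2 - (d : ℝ) / (2 * t)) :
    ∀ t₁ t₂ : ℝ, 0 < t₁ → t₁ < t₂ → ∀ x₁ x₂ : EuclideanSpace ℝ (Fin d),
      u t₁ x₁ ≤ u t₂ x₂ * (t₂ / t₁) ^ ((d : ℝ) / 2)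
        * Real.exp (‖x₁ - x₂‖ ^ 2 / (4 * (t₂ - t₁))) := by
  intro t₁ t₂ ht₁ ht₁₂ x₁ x₂
  have ht₂ : (0:ℝ) < t₂ := ht₁.trans ht₁₂
  set Δt : ℝ := t₂ - t₁ with hΔt
  have hΔtpos : 0 < Δt := sub_pos.2 ht₁₂
  set Δx := x₂ - x₁ with hΔx
  set F : ℝ × EuclideanSpace ℝ (Fin d) → ℝ := fun p => Real.log (u p.1 p.2) with hFdef
  set φ : ℝ → ℝ := fun s => Real.log (u (t₁ + s * Δt) (x₁ + s • Δx)) with hφdef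
  -- the derivative of φ along the path, with the key lower bound
  have key : ∀ s : ℝ, 0 < t₁ + s * Δt → ∃ c, HasDerivAt φ c s ∧
      -‖Δx‖ ^ 2 / (4 * Δt) - (d : ℝ) * Δt / (2 * (t₁ + s * Δt)) ≤ c := by
    intro s hts
    set t : ℝ := t₁ + s * Δt with htdef
    set xs := x₁ + s • Δx with hxsdef
    have hu : ContDiffAt ℝ (⊤ : ℕ∞) (Function.uncurry u) (t, xs) := hsmooth t hts xs
    have hFc : ContDiffAt ℝ (⊤ : ℕ∞) F (t, xs) := hu.log (ne_of_gt (hpos t hts xs))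
    have hL : HasFDerivAt F (fderiv ℝ F (t, xs)) (t, xs) :=
      (hFc.differentiableAt (by simp)).hasFDerivAt
    set L := fderiv ℝ F (t, xs) with hLdef
    have hγ : HasDerivAt (fun s' : ℝ => ((t₁ + s' * Δt, x₁ + s' • Δx) : ℝ × EuclideanSpace ℝ (Fin d))) (Δt, Δx) s := by
      refine HasDerivAt.prodMk ?_ ?_
      · simpa using ((hasDerivAt_id s).mul_const Δt).const_add t₁
      · simpa using ((hasDerivAt_id s).smul_const Δx).const_add x₁
    have hφ' : HasDerivAt φ (L (Δt, Δx)) s := by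
      have := hL.comp_hasDerivAt s hγ; exact this
    -- time partial derivative
    have hpt : HasDerivAt (fun r => Real.log (u r xs)) (L (1, 0)) t := by
      have h1 : HasDerivAt (fun r : ℝ => ((r, xs) : ℝ × EuclideanSpace ℝ (Fin d))) ((1 : ℝ), (0 : EuclideanSpace ℝ (Fin d))) t :=
        (hasDerivAt_id t).prodMk (hasDerivAt_const t xs)
      exact hL.comp_hasDerivAt t h1
    have hdt : deriv (fun r => Real.log (u r xs)) t = L (1, 0) := hpt.deriv
    -- space partial derivative and gradient
    set G := gradient (fun y => Real.log (u t y)) xs with hGdef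
    have hinx : HasFDerivAt (fun y : EuclideanSpace ℝ (Fin d) => ((t, y) : ℝ × EuclideanSpace ℝ (Fin d)))
        (((0 : EuclideanSpace ℝ (Fin d) →L[ℝ] ℝ)).prod (ContinuousLinearMap.id ℝ (EuclideanSpace ℝ (Fin d)))) xs :=
      HasFDerivAt.prodMk (hasFDerivAt_const t xs) (hasFDerivAt_id xs)
    have hfx : HasFDerivAt (fun y : EuclideanSpace ℝ (Fin d) => Real.log (u t y))
        (L.comp (((0 : EuclideanSpace ℝ (Fin d) →L[ℝ] ℝ)).prod (ContinuousLinearMap.id ℝ (EuclideanSpace ℝ (Fin d))))) xs :=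
      hL.comp xs hinx
    have hGinner : inner ℝ G Δx = L (0, Δx) := by
      rw [hGdef, gradient, hfx.fderiv, InnerProductSpace.toDual_symm_apply]
      rfl
    -- decompose L (Δt, Δx)
    have hsplit : L (Δt, Δx) = Δt * L (1, 0) + L (0, Δx) := by
      have h : ((Δt, Δx) : ℝ × EuclideanSpace ℝ (Fin d)) = Δt • ((1 : ℝ), (0 : EuclideanSpace ℝ (Fin d))) + ((0 : ℝ), Δx) := by
        simp [Prod.ext_iff]
      rw [h, map_add, map_smul, smul_eq_mul]
    -- Li-Yau at (t, xs)
    have hly : L (1, 0) ≥ ‖G‖ ^ 2 - (d : ℝ) / (2 * t) := by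
      have := hLY t hts xs
      rwa [hdt] at this
    have hip : -(‖G‖ * ‖Δx‖) ≤ inner ℝ G Δx := by
      have := abs_real_inner_le_norm G Δx
      have := neg_abs_le (inner ℝ G Δx : ℝ)
      linarith [abs_real_inner_le_norm G Δx, neg_abs_le (inner ℝ G Δx : ℝ)]
    refine ⟨L (Δt, Δx), hφ', ?_⟩
    rw [hsplit, ← hGinner]
    have h1 : ‖G‖ * ‖Δx‖ - Δt * ‖G‖ ^ 2 ≤ ‖Δx‖ ^ 2 / (4 * Δt) := by
      have he : ‖Δx‖ ^ 2 / (4 * Δt) + Δt * ‖G‖ ^ 2 - ‖G‖ * ‖Δx‖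
          = (2 * Δt * ‖G‖ - ‖Δx‖) ^ 2 / (4 * Δt) := by
        field_simp
        ring
      have hnn : 0 ≤ (2 * Δt * ‖G‖ - ‖Δx‖) ^ 2 / (4 * Δt) := by positivity
      linarith [he ▸ hnn]
    have h2 : Δt * (‖G‖ ^ 2 - (d : ℝ) / (2 * t)) ≤ Δt * L (1, 0) :=
      mul_le_mul_of_nonneg_left hly hΔtpos.le
    have h3 : Δt * (‖G‖ ^ 2 - (d : ℝ) / (2 * t)) =
        Δt * ‖G‖ ^ 2 - (d : ℝ) * Δt / (2 * t) := by ring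
    rw [h3] at h2
    have hneg : -(‖Δx‖ ^ 2 / (4 * Δt)) = -‖Δx‖ ^ 2 / (4 * Δt) := by ring
    linarith
  -- the comparison function
  set g : ℝ → ℝ := fun s => φ s + s * (‖Δx‖ ^ 2 / (4 * Δt))
      + ((d : ℝ) / 2) * Real.log (t₁ + s * Δt) with hgdef
  have keyg : ∀ s : ℝ, 0 < t₁ + s * Δt → ∃ c, HasDerivAt g c s ∧ 0 ≤ c := by
    intro s hts
    obtain ⟨c, hc, hcb⟩ := key s hts
    refine ⟨c + ‖Δx‖ ^ 2 / (4 * Δt) + (d : ℝ) / 2 * (Δt / (t₁ + s * Δt)), ?_, ?_⟩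
    · have h1 : HasDerivAt (fun s' : ℝ => s' * (‖Δx‖ ^ 2 / (4 * Δt)))
          (‖Δx‖ ^ 2 / (4 * Δt)) s := by simpa using (hasDerivAt_id s).mul_const _
      have h2 : HasDerivAt (fun s' : ℝ => t₁ + s' * Δt) Δt s := by
        simpa using ((hasDerivAt_id s).mul_const Δt).const_add t₁
      have h3 := (h2.log (ne_of_gt hts)).const_mul ((d : ℝ) / 2)
      exact (hc.add h1).add h3
    · have hdiv : (d : ℝ) / 2 * (Δt / (t₁ + s * Δt))
          = (d : ℝ) * Δt / (2 * (t₁ + s * Δt)) := div_mul_div_comm _ _ _ _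
      have hneg : -‖Δx‖ ^ 2 / (4 * Δt) = -(‖Δx‖ ^ 2 / (4 * Δt)) := by ring
      rw [hdiv]
      linarith [hcb, hneg ▸ hcb]
  have hIcc : ∀ s : ℝ, s ∈ Set.Icc (0 : ℝ) 1 → 0 < t₁ + s * Δt := by
    intro s hs
    nlinarith [hs.1, mul_nonneg hs.1 hΔtpos.le]
  have hmono : MonotoneOn g (Set.Icc 0 1) := by
    refine monotoneOn_of_deriv_nonneg (convex_Icc 0 1) ?_ ?_ ?_
    · intro s hs
      obtain ⟨c, hc, _⟩ := keyg s (hIcc s hs)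
      exact hc.continuousAt.continuousWithinAt
    · intro s hs
      rw [interior_Icc] at hs
      obtain ⟨c, hc, _⟩ := keyg s (hIcc s ⟨hs.1.le, hs.2.le⟩)
      exact hc.differentiableAt.differentiableWithinAt
    · intro s hs
      rw [interior_Icc] at hs
      obtain ⟨c, hc, h0⟩ := keyg s (hIcc s ⟨hs.1.le, hs.2.le⟩)
      rw [hc.deriv]; exact h0
  have hg01 : g 0 ≤ g 1 :=
    hmono (Set.left_mem_Icc.2 zero_le_one) (Set.right_mem_Icc.2 zero_le_one) zero_le_one
  have hg0 : g 0 = Real.log (u t₁ x₁) + ((d : ℝ) / 2) * Real.log t₁ := by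
    simp [hgdef, hφdef]
  have hg1 : g 1 = Real.log (u t₂ x₂) + ‖Δx‖ ^ 2 / (4 * Δt)
      + ((d : ℝ) / 2) * Real.log t₂ := by
    have ht : t₁ + Δt = t₂ := by rw [hΔt]; ring
    have hx : x₁ + Δx = x₂ := by rw [hΔx]; abel
    simp [hgdef, hφdef, ht, hx]
  have hlog : Real.log (u t₁ x₁) ≤ Real.log (u t₂ x₂)
      + ((d : ℝ) / 2) * (Real.log t₂ - Real.log t₁) + ‖Δx‖ ^ 2 / (4 * Δt) := by
    rw [hg0, hg1] at hg01; linarith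
  have hnorm : ‖x₁ - x₂‖ = ‖Δx‖ := by rw [hΔx, norm_sub_rev]
  calc u t₁ x₁ = Real.exp (Real.log (u t₁ x₁)) := (Real.exp_log (hpos t₁ ht₁ x₁)).symm
    _ ≤ Real.exp (Real.log (u t₂ x₂)
        + ((d : ℝ) / 2) * (Real.log t₂ - Real.log t₁) + ‖Δx‖ ^ 2 / (4 * Δt)) :=
      Real.exp_le_exp.2 hlog
    _ = u t₂ x₂ * (t₂ / t₁) ^ ((d : ℝ) / 2) * Real.exp (‖x₁ - x₂‖ ^ 2 / (4 * (t₂ - t₁))) := by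
      rw [Real.exp_add, Real.exp_add, Real.exp_log (hpos t₂ ht₂ x₂), hnorm, ← hΔt]
      congr 2
      rw [Real.rpow_def_of_pos (div_pos ht₂ ht₁), Real.log_div (ne_of_gt ht₂) (ne_of_gt ht₁)]
      ring_nf
end

section
/- Let X be a finite state space with Markov generator L, reversible probability measure π, and Markov semigroup P_t = e^{tL}. For a positive probability density f, the entropy H(P_t f) = Σ_x (P_t f)(x) log((P_t f)(x)) π(x) satisfies d/dt H(P_t f) = −Σ_x (P_t f)(x) Ψ_Υ(log(P_t f))(x) π(x). -/
/-!
Write `u = P_t f`. Since `d/dt P_t f = L P_t f`, differentiating the entropy gives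
`⟨log u + 1, L u⟩_π`. Detailed balance makes `L` self-adjoint in `ℓ²(π)`, and `L 1 = 0`, so
`⟨1, L u⟩_π = 0` and `⟨log u, L u⟩_π = ⟨u, L log u⟩_π`. On the other hand, because `L`
annihilates constants, `u Ψ_Υ(log u) = L u - u L(log u)` pointwise, whose `π`-integral is
`-⟨u, L log u⟩_π`.
-/

open NormedSpace Matrix Finset

theorem Matrix.hasDerivAt_exp_smul_mulVec {𝕂 X : Type*} [RCLike 𝕂] [Fintype X] [DecidableEq X]
    (K : Matrix X X 𝕂) (v : X → 𝕂) (t : 𝕂) :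
    HasDerivAt (fun s : 𝕂 => exp (s • K) *ᵥ v) (K *ᵥ (exp (t • K) *ᵥ v)) t := by
  rw [mulVec_mulVec]
  open scoped Norms.Operator in
  exact ((mulVecBilin 𝕂 𝕂).flip v).toContinuousLinearMap.hasFDerivAt.comp_hasDerivAt t
    (hasDerivAt_exp_smul_const' K t)

section DetailedBalance

variable {X R : Type*} [Fintype X] [CommRing R] {K : Matrix X X R} {p : X → R}

theorem Matrix.mulVec_apply_eq_sum_mul_sub (hrow : ∀ x, ∑ y, K x y = 0) (g : X → R) (x : X) :
    (K *ᵥ g) x = ∑ y, K x y * (g y - g x) := by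
  simp only [mul_sub, sum_sub_distrib, ← sum_mul, hrow, zero_mul, sub_zero, mulVec, dotProduct]

theorem sum_mul_mulVec_mul_comm (hdb : ∀ x y, p x * K x y = p y * K y x) (g h : X → R) :
    ∑ x, g x * (K *ᵥ h) x * p x = ∑ x, h x * (K *ᵥ g) x * p x := by
  simp only [mulVec, dotProduct, mul_sum, sum_mul]
  rw [sum_comm]
  exact sum_congr rfl fun x _ => sum_congr rfl fun y _ => by
    linear_combination (g y * h x) * hdb y x

theorem sum_mulVec_mul_eq_zero (hrow : ∀ x, ∑ y, K x y = 0)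
    (hdb : ∀ x y, p x * K x y = p y * K y x) (h : X → R) :
    ∑ x, (K *ᵥ h) x * p x = 0 := by
  have hK1 : K *ᵥ (fun _ => 1) = 0 := funext fun x => by
    simp [mulVec, dotProduct, hrow]
  simpa [hK1] using sum_mul_mulVec_mul_comm hdb (fun _ => 1) h

end DetailedBalance

section Entropy

variable {X : Type*} [Fintype X] {K : Matrix X X ℝ} {p u : X → ℝ}

theorem mul_sum_mul_exp_log_sub (hrow : ∀ x, ∑ y, K x y = 0) (hu : ∀ x, 0 < u x) (x : X) :
    u x * ∑ y, K x y
        * (Real.exp (Real.log (u y) - Real.log (u x)) - 1 - (Real.log (u y) - Real.log (u x)))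
      = (K *ᵥ u) x - u x * (K *ᵥ fun y => Real.log (u y)) x := by
  rw [mulVec_apply_eq_sum_mul_sub hrow, mulVec_apply_eq_sum_mul_sub hrow, mul_sum, mul_sum,
    ← sum_sub_distrib]
  refine sum_congr rfl fun y _ => ?_
  rw [Real.exp_sub, Real.exp_log (hu y), Real.exp_log (hu x)]
  field_simp [(hu x).ne']

theorem sum_log_add_one_mul_mulVec_mul (hrow : ∀ x, ∑ y, K x y = 0)
    (hdb : ∀ x y, p x * K x y = p y * K y x) (hu : ∀ x, 0 < u x) :
    ∑ x, (Real.log (u x) + 1) * (K *ᵥ u) x * p x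
      = -∑ x, u x * (∑ y, K x y
          * (Real.exp (Real.log (u y) - Real.log (u x)) - 1 - (Real.log (u y) - Real.log (u x))))
          * p x := by
  calc ∑ x, (Real.log (u x) + 1) * (K *ᵥ u) x * p x
      = ∑ x, Real.log (u x) * (K *ᵥ u) x * p x + ∑ x, (K *ᵥ u) x * p x := by
        simp only [add_mul, one_mul, sum_add_distrib]
    _ = ∑ x, u x * (K *ᵥ fun y => Real.log (u y)) x * p x := by
        rw [sum_mul_mulVec_mul_comm hdb, sum_mulVec_mul_eq_zero hrow hdb, add_zero]
    _ = -∑ x, ((K *ᵥ u) x - u x * (K *ᵥ fun y => Real.log (u y)) x) * p x := by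
        simp only [sub_mul, sum_sub_distrib, sum_mulVec_mul_eq_zero hrow hdb, zero_sub, neg_neg]
    _ = _ := by simp_rw [mul_sum_mul_exp_log_sub hrow hu]

theorem hasDerivAt_sum_mul_log_exp_smul_mulVec [DecidableEq X] (K : Matrix X X ℝ)
    (p v : X → ℝ) (t : ℝ) (hv : ∀ x, (exp (t • K) *ᵥ v) x ≠ 0) :
    HasDerivAt (fun s => ∑ x, (exp (s • K) *ᵥ v) x * Real.log ((exp (s • K) *ᵥ v) x) * p x)
      (∑ x, (Real.log ((exp (t • K) *ᵥ v) x) + 1) * (K *ᵥ (exp (t • K) *ᵥ v)) x * p x) t :=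
  HasDerivAt.fun_sum fun x _ =>
    (((Real.hasDerivAt_mul_log (hv x)).comp t
      (hasDerivAt_pi.1 (hasDerivAt_exp_smul_mulVec K v t) x)).mul_const (p x) :)

end Entropy

theorem entropy_dissipation_general {X : Type*} [Fintype X] [DecidableEq X]
    (K : Matrix X X ℝ) (p : X → ℝ)
    (hrow : ∀ x : X, ∑ y : X, K x y = 0)
    (hdb : ∀ x y : X, p x * K x y = p y * K y x)
    (f : X → ℝ)
    (hpos : ∀ t : ℝ, 0 ≤ t → ∀ x, 0 < (exp (t • K)).mulVec f x) :
    ∀ t : ℝ, 0 ≤ t →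
      HasDerivAt
        (fun s => ∑ x : X, (exp (s • K)).mulVec f x
          * Real.log ((exp (s • K)).mulVec f x) * p x)
        (-(∑ x : X, (exp (t • K)).mulVec f x
          * (∑ y : X, K x y
            * (Real.exp (Real.log ((exp (t • K)).mulVec f y)
                  - Real.log ((exp (t • K)).mulVec f x)) - 1
              - (Real.log ((exp (t • K)).mulVec f y)
                  - Real.log ((exp (t • K)).mulVec f x)))) * p x)) t := by
  intro t ht
  rw [← sum_log_add_one_mul_mulVec_mul hrow hdb (hpos t ht)]
  exact hasDerivAt_sum_mul_log_exp_smul_mulVec K p f t fun x => (hpos t ht x).ne'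

/-- Entropy dissipation identity: on a finite state space with Markov generator matrix `K`
(off-diagonal entries nonnegative, row sums zero), reversible probability measure `p`, and
semigroup `P_t = e^{tK}`, the entropy `H(P_t f) = Σ_x (P_t f)(x) log((P_t f)(x)) p(x)` of a
positive probability density `f` satisfies
`d/dt H(P_t f) = - Σ_x (P_t f)(x) Ψ_Υ(log(P_t f))(x) p(x)`. -/
theorem entropy_dissipation {X : Type*} [Fintype X] [DecidableEq X]
    (K : Matrix X X ℝ) (p : X → ℝ)
    (hoff : ∀ x y : X, x ≠ y → 0 ≤ K x y) (hrow : ∀ x : X, ∑ y : X, K x y = 0)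
    (hp : ∀ x, 0 < p x) (hp1 : ∑ x : X, p x = 1)
    (hdb : ∀ x y : X, p x * K x y = p y * K y x)
    (f : X → ℝ) (hf : ∀ x, 0 < f x) (hf1 : ∑ x : X, f x * p x = 1)
    (hpos : ∀ t : ℝ, 0 ≤ t → ∀ x, 0 < (exp (t • K)).mulVec f x) :
    ∀ t : ℝ, 0 ≤ t →
      HasDerivAt
        (fun s => ∑ x : X, (exp (s • K)).mulVec f x
          * Real.log ((exp (s • K)).mulVec f x) * p x)
        (-(∑ x : X, (exp (t • K)).mulVec f x
          * (∑ y : X, K x y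
            * (Real.exp (Real.log ((exp (t • K)).mulVec f y)
                  - Real.log ((exp (t • K)).mulVec f x)) - 1
              - (Real.log ((exp (t • K)).mulVec f y)
                  - Real.log ((exp (t • K)).mulVec f x)))) * p x)) t :=
  entropy_dissipation_general K p hrow hdb f hpos
end

section
/- For the complete graph K₂ (two vertices with unit edge weight and generator Lf(x) = f(y) − f(x) for {x,y} = {1,2}), the condition CD_Υ(2,∞) holds: Ψ_{2,Υ}(f) ≥ 2Ψ_Υ(f) pointwise for all f : {1,2} → ℝ. -/
/-- Jump rates of the unweighted complete graph `K₂` on two vertices. -/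
def k2 : Fin 2 → Fin 2 → ℝ := fun x y => if x = y then 0 else 1

noncomputable def Ups (z : ℝ) : ℝ := Real.exp z - 1 - z

noncomputable def L2 (f : Fin 2 → ℝ) (x : Fin 2) : ℝ := ∑ y : Fin 2, k2 x y * (f y - f x)

noncomputable def PsiUps (f : Fin 2 → ℝ) (x : Fin 2) : ℝ :=
  ∑ y : Fin 2, k2 x y * Ups (f y - f x)

noncomputable def BUps' (f g : Fin 2 → ℝ) (x : Fin 2) : ℝ :=
  ∑ y : Fin 2, k2 x y * (Real.exp (f y - f x) - 1) * (g y - g x)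

noncomputable def Psi2Ups (f : Fin 2 → ℝ) (x : Fin 2) : ℝ :=
  (1 / 2) * (L2 (PsiUps f) x - BUps' f (L2 f) x)

/-!
With `z = f y - f x` for the other vertex `y`, one has `Ψ_Υ(f)(x) = Υ(z)` and
`Ψ_{2,Υ}(f)(x) = (Υ(-z) - Υ(z) + 2z(e^z - 1)) / 2`, so the claim is `gap z ≥ 0` for
`gap z = e^{-z} + (2z - 5) e^z + 4 + 4z`. Now `gap 0 = gap' 0 = 0`, and `gap` is convex because
`gap'' z = e^z (e^{-2z} - (1 - 2z)) ≥ 0`; hence `0` is a global minimum of `gap`.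
-/

open Real Set

theorem ConvexOn.isMinOn_of_hasDerivAt_eq_zero {S : Set ℝ} {f : ℝ → ℝ} {x : ℝ}
    (hf : ConvexOn ℝ S f) (hx : x ∈ interior S) (hd : HasDerivAt f 0 x) : IsMinOn f S x :=
  hf.isMinOn_of_rightDeriv_eq_zero hx (hd.hasDerivWithinAt.derivWithin (uniqueDiffWithinAt_Ioi x))

theorem hasDerivAt_exp_neg (z : ℝ) : HasDerivAt (fun t => exp (-t)) (-exp (-z)) z := by
  simpa using (hasDerivAt_neg z).exp

theorem hasDerivAt_linear_mul_exp (a b z : ℝ) :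
    HasDerivAt (fun t => (a * t + b) * exp t) ((a * z + b + a) * exp z) z := by
  refine ((((hasDerivAt_id z).const_mul a).add_const b).mul (hasDerivAt_exp z)).congr_deriv ?_
  simp only [id, mul_one]; ring

namespace K2

noncomputable def gap (z : ℝ) : ℝ := exp (-z) + (2 * z - 5) * exp z + 4 + 4 * z

noncomputable def gapDeriv (z : ℝ) : ℝ := -exp (-z) + (2 * z - 3) * exp z + 4

noncomputable def gapDeriv2 (z : ℝ) : ℝ := exp (-z) + (2 * z - 1) * exp z

theorem hasDerivAt_gap (z : ℝ) : HasDerivAt gap (gapDeriv z) z := by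
  refine ((((hasDerivAt_exp_neg z).add (hasDerivAt_linear_mul_exp 2 (-5) z)).add_const 4).add
    ((hasDerivAt_id z).const_mul 4)).congr_deriv ?_
  simp only [gapDeriv, mul_one]; ring

theorem hasDerivAt_gapDeriv (z : ℝ) : HasDerivAt gapDeriv (gapDeriv2 z) z := by
  refine (((hasDerivAt_exp_neg z).neg.add
    (hasDerivAt_linear_mul_exp 2 (-3) z)).add_const 4).congr_deriv ?_
  simp only [gapDeriv2]; ring

theorem gapDeriv2_nonneg (z : ℝ) : 0 ≤ gapDeriv2 z := by
  have h : gapDeriv2 z = exp z * (exp (-2 * z) - (-2 * z + 1)) := by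
    rw [gapDeriv2, mul_sub, ← exp_add]; ring_nf
  rw [h]
  exact mul_nonneg (exp_pos z).le (sub_nonneg.mpr (add_one_le_exp _))

theorem convexOn_gap : ConvexOn ℝ univ gap :=
  convexOn_of_hasDerivWithinAt2_nonneg convex_univ
    (fun z _ => (hasDerivAt_gap z).continuousAt.continuousWithinAt)
    (fun z _ => (hasDerivAt_gap z).hasDerivWithinAt)
    (fun z _ => (hasDerivAt_gapDeriv z).hasDerivWithinAt)
    (fun z _ => gapDeriv2_nonneg z)

theorem gap_nonneg (z : ℝ) : 0 ≤ gap z := by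
  have hd : HasDerivAt gap 0 0 := by
    convert hasDerivAt_gap 0 using 1; norm_num [gapDeriv]
  calc 0 = gap 0 := by norm_num [gap]
    _ ≤ gap z := convexOn_gap.isMinOn_of_hasDerivAt_eq_zero (by simp) hd (mem_univ z)

theorem psiUps_eq (f : Fin 2 → ℝ) (x : Fin 2) : PsiUps f x = Ups (f x.rev - f x) := by
  fin_cases x <;> simp [PsiUps, k2, Fin.sum_univ_two]

theorem psi2Ups_eq (f : Fin 2 → ℝ) (x : Fin 2) :
    Psi2Ups f x = (Ups (-(f x.rev - f x)) - Ups (f x.rev - f x)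
      + 2 * (f x.rev - f x) * (exp (f x.rev - f x) - 1)) / 2 := by
  fin_cases x <;> simp [Psi2Ups, PsiUps, L2, BUps', k2, Fin.sum_univ_two] <;> ring_nf

theorem two_mul_ups_le (z : ℝ) :
    2 * Ups z ≤ (Ups (-z) - Ups z + 2 * z * (exp z - 1)) / 2 := by
  have h := gap_nonneg z
  simp only [gap] at h
  simp only [Ups]
  linarith

end K2

/-- The complete graph `K₂` satisfies `CD_Υ(2,∞)`: `Ψ_{2,Υ}(f) ≥ 2 Ψ_Υ(f)` pointwise. -/
theorem K2_CDUps_two : ∀ f : Fin 2 → ℝ, ∀ x : Fin 2, 2 * PsiUps f x ≤ Psi2Ups f x := by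
  intro f x
  rw [K2.psiUps_eq, K2.psi2Ups_eq]
  exact K2.two_mul_ups_le _
end

section
/- Let L be a jump operator on ℤ with symmetric kernel k (k(−j) = k(j) ≥ 0, k(0) = 0, Σ k(j) < ∞) such that Σ_{j∈ℕ} k(j)^{1−δ} < ∞ for some δ ∈ (0,1). Then there is c > 0 such that Ψ_{2,Υ}(f)(x) ≥ c|Lf(x)|^γ for all bounded f : ℤ → ℝ and x ∈ ℤ, with γ = (1+δ)/δ. -/
open Real Finset Nat

lemma Ups_nonneg (z : ℝ) : 0 ≤ Ups z := by
  unfold Ups; linarith [add_one_le_exp z]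

lemma Ups_le_exp_abs (z : ℝ) : Ups z ≤ exp |z| := by
  unfold Ups
  rcases le_total 0 z with hz | hz
  · rw [abs_of_nonneg hz]; linarith
  · rw [abs_of_nonpos hz]; linarith [exp_le_one_iff.2 hz, add_one_le_exp (-z)]

lemma exp_half_add_le (u v : ℝ) : exp ((u + v) / 2) ≤ (exp u + exp v) / 2 := by
  have := convexOn_exp.2 (Set.mem_univ u) (Set.mem_univ v) (by norm_num : (0 : ℝ) ≤ 1 / 2)
    (by norm_num : (0 : ℝ) ≤ 1 / 2) (by norm_num)
  simp only [smul_eq_mul] at this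
  rw [show (u + v) / 2 = 1 / 2 * u + 1 / 2 * v by ring]
  linarith

lemma Ups_abs_half_le_exp_mul_Ups_neg (s : ℝ) : Ups (|s| / 2) ≤ exp (s / 2) * Ups (-s) := by
  have hX : 0 < exp (s / 2) := exp_pos _
  have hY : 0 < exp (-s / 2) := exp_pos _
  have hXY : exp (s / 2) * exp (-s / 2) = 1 := by
    rw [← exp_add, show s / 2 + -s / 2 = 0 by ring, exp_zero]
  have hYY : exp (-s / 2) * exp (-s / 2) = exp (-s) := by rw [← exp_add]; ring_nf
  have h1 : 1 + s / 2 ≤ exp (s / 2) := by linarith [add_one_le_exp (s / 2)]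
  have h2 : 1 + -s / 2 ≤ exp (-s / 2) := by linarith [add_one_le_exp (-s / 2)]
  unfold Ups
  rcases le_total 0 s with hs | hs
  · rw [abs_of_nonneg hs]
    nlinarith [mul_le_mul_of_nonneg_right h2 hX.le]
  · rw [abs_of_nonpos hs]
    nlinarith [mul_le_mul_of_nonneg_right h1 hY.le, sq_nonneg (s / 2), mul_pos hX hY]

lemma pow_div_factorial_le_Ups {n : ℕ} (hn : 2 ≤ n) {t : ℝ} (ht : 0 ≤ t) :
    t ^ n / n ! ≤ Ups t := by
  have hexp := sum_le_exp_of_nonneg ht (n + 1)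
  have hlow : ∑ i ∈ range 2, t ^ i / i ! ≤ ∑ i ∈ range n, t ^ i / i ! :=
    sum_le_sum_of_subset_of_nonneg (range_mono hn) fun _ _ _ => by positivity
  rw [sum_range_succ] at hexp
  simp only [sum_range_succ, range_zero, sum_empty, pow_zero, pow_one, factorial_zero,
    factorial_one, cast_one, div_one, zero_add] at hlow
  unfold Ups
  linarith

lemma rpow_le_factorial_mul_Ups {γ : ℝ} (hγ : 2 ≤ γ) {n : ℕ} (hγn : γ ≤ n) {t : ℝ}
    (ht : 0 ≤ t) : t ^ γ ≤ n ! * Ups t := by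
  have hn : 2 ≤ n := by exact_mod_cast hγ.trans hγn
  rcases le_total t 1 with ht1 | ht1
  · have hsq : t ^ 2 / 2 ≤ Ups t := by simpa using pow_div_factorial_le_Ups le_rfl ht
    have hfac : (2 : ℝ) ≤ n ! := by exact_mod_cast hn.trans (self_le_factorial n)
    calc t ^ γ ≤ t ^ (2 : ℝ) := rpow_le_rpow_of_exponent_ge' ht ht1 (by norm_num) hγ
      _ = t ^ 2 := rpow_two t
      _ ≤ 2 * Ups t := by linarith
      _ ≤ n ! * Ups t := by gcongr; exact Ups_nonneg t
  · have hpow := pow_div_factorial_le_Ups hn ht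
    rw [div_le_iff₀ (by positivity)] at hpow
    calc t ^ γ ≤ t ^ (n : ℝ) := rpow_le_rpow_of_exponent_le ht1 hγn
      _ = t ^ n := rpow_natCast t n
      _ ≤ n ! * Ups t := by linarith

lemma exists_rpow_abs_le_mul_exp_mul_Ups {γ : ℝ} (hγ : 2 ≤ γ) :
    ∃ C > 0, ∀ s : ℝ, |s| ^ γ ≤ C * (exp (s / 2) * Ups (-s)) := by
  refine ⟨2 ^ γ * (⌈γ⌉₊ ! : ℝ), by positivity, fun s => ?_⟩
  have h := rpow_le_factorial_mul_Ups hγ (le_ceil γ) (by positivity : 0 ≤ |s| / 2)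
  calc |s| ^ γ = 2 ^ γ * (|s| / 2) ^ γ := by
        rw [← mul_rpow zero_le_two (by positivity)]; ring_nf
    _ ≤ 2 ^ γ * (⌈γ⌉₊ ! * Ups (|s| / 2)) := by gcongr
    _ ≤ 2 ^ γ * ⌈γ⌉₊ ! * (exp (s / 2) * Ups (-s)) := by
        rw [mul_assoc]; gcongr; exact Ups_abs_half_le_exp_mul_Ups_neg s

section Sums

variable {ι : Type*} {k g : ι → ℝ} {M : ℝ}

lemma tsum_le_tsum_tsum_of_nonneg {κ : Type*} {T : ι → κ → ℝ} (σ : ι → κ)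
    (hT : ∀ a b, 0 ≤ T a b) (hrow : ∀ a, Summable (T a))
    (hsum : Summable fun a => ∑' b, T a b) : ∑' a, T a (σ a) ≤ ∑' a, ∑' b, T a b := by
  have hle : ∀ a, T a (σ a) ≤ ∑' b, T a b := fun a => (hrow a).le_tsum _ fun b _ => hT a b
  exact (hsum.of_nonneg_of_le (fun a => hT a _) hle).tsum_le_tsum hle hsum

lemma summable_mul_of_abs_le (hk : ∀ j, 0 ≤ k j) (hsum : Summable k) (hg : ∀ j, |g j| ≤ M) :
    Summable fun j => k j * g j :=
  (hsum.mul_left M).of_norm_bounded fun j => by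
    rw [norm_mul, Real.norm_of_nonneg (hk j), Real.norm_eq_abs, mul_comm M]
    exact mul_le_mul_of_nonneg_left (hg j) (hk j)

lemma summable_sq_mul_rpow_abs (hk : ∀ j, 0 ≤ k j) (hsum : Summable k)
    (hg : ∀ j, |g j| ≤ M) {γ : ℝ} (hγ : 0 ≤ γ) :
    Summable fun j => k j ^ 2 * |g j| ^ γ := by
  refine (hsum.mul_left ((∑' i, k i) * M ^ γ)).of_nonneg_of_le
    (fun j => by have := hk j; positivity) fun j => ?_
  have hkj : k j ≤ ∑' i, k i := hsum.le_tsum j fun i _ => hk i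
  have hgj : |g j| ^ γ ≤ M ^ γ := rpow_le_rpow (abs_nonneg _) (hg j) hγ
  calc k j ^ 2 * |g j| ^ γ = k j * (k j * |g j| ^ γ) := by ring
    _ ≤ k j * ((∑' i, k i) * M ^ γ) :=
        mul_le_mul_of_nonneg_left
          (mul_le_mul hkj hgj (by positivity) ((hk j).trans hkj)) (hk j)
    _ = (∑' i, k i) * M ^ γ * k j := by ring

variable {δ : ℝ}

lemma holderConjugate_one_add_div (hδ : 0 < δ) : ((1 + δ) / δ).HolderConjugate (1 + δ) := by
  have h := holderConjugate_one_div (a := δ / (1 + δ)) (b := 1 / (1 + δ)) (by positivity)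
    (by positivity) (by field_simp; ring)
  simpa only [one_div_div, div_one] using h

-- Hölder with exponents `(1 + δ) / δ` and `1 + δ` for
-- `k = k ^ (2δ/(1+δ)) * k ^ ((1-δ)/(1+δ))`.
lemma summable_and_tsum_mul_abs_rpow_le (hδ : 0 < δ) (hk : ∀ j, 0 ≤ k j)
    (hP : Summable fun j => k j ^ 2 * |g j| ^ ((1 + δ) / δ))
    (hS : Summable fun j => k j ^ (1 - δ)) :
    (Summable fun j => k j * |g j|) ∧
      (∑' j, k j * |g j|) ^ ((1 + δ) / δ) ≤
        (∑' j, k j ^ 2 * |g j| ^ ((1 + δ) / δ)) *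
          (∑' j, k j ^ (1 - δ)) ^ ((1 + δ) / δ - 1) := by
  set γ := (1 + δ) / δ with hγ
  have hγ0 : 0 < γ := by positivity
  set u : ι → ℝ := fun j => k j ^ (2 * δ / (1 + δ)) * |g j|
  set v : ι → ℝ := fun j => k j ^ ((1 - δ) / (1 + δ))
  have hu : ∀ j, u j ^ γ = k j ^ 2 * |g j| ^ γ := fun j => by
    rw [mul_rpow (rpow_nonneg (hk j) _) (abs_nonneg _), ← rpow_mul (hk j),
      show 2 * δ / (1 + δ) * γ = (2 : ℕ) by rw [hγ]; field_simp; norm_num, rpow_natCast]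
  have hv : ∀ j, v j ^ (1 + δ) = k j ^ (1 - δ) := fun j => by
    rw [← rpow_mul (hk j), div_mul_cancel₀ _ (by positivity)]
  have hexp : 2 * δ / (1 + δ) + (1 - δ) / (1 + δ) = 1 := by field_simp; ring
  have huv : ∀ j, u j * v j = k j * |g j| := fun j => by
    rw [mul_right_comm, ← rpow_add' (hk j) (by rw [hexp]; norm_num), hexp, rpow_one]
  obtain ⟨hsumm, hle⟩ := summable_and_inner_le_Lp_mul_Lq_tsum_of_nonneg (f := u) (g := v)
    (holderConjugate_one_add_div hδ)
    (fun j => mul_nonneg (rpow_nonneg (hk j) _) (abs_nonneg _)) (fun j => rpow_nonneg (hk j) _)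
    (hP.congr fun j => (hu j).symm) (hS.congr fun j => (hv j).symm)
  simp only [huv, hv, ← hγ] at hsumm hle
  rw [tsum_congr hu] at hle
  refine ⟨hsumm, ?_⟩
  have hP0 : 0 ≤ ∑' j, k j ^ 2 * |g j| ^ γ := tsum_nonneg fun j => by have := hk j; positivity
  have hS0 : 0 ≤ ∑' j, k j ^ (1 - δ) := tsum_nonneg fun j => rpow_nonneg (hk j) _
  calc (∑' j, k j * |g j|) ^ γ
      ≤ ((∑' j, k j ^ 2 * |g j| ^ γ) ^ (1 / γ) *
          (∑' j, k j ^ (1 - δ)) ^ (1 / (1 + δ))) ^ γ :=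
        rpow_le_rpow (tsum_nonneg fun j => mul_nonneg (hk j) (abs_nonneg _)) hle hγ0.le
    _ = (∑' j, k j ^ 2 * |g j| ^ γ) * (∑' j, k j ^ (1 - δ)) ^ (γ - 1) := by
        rw [mul_rpow (by positivity) (by positivity), ← rpow_mul hP0, ← rpow_mul hS0,
          one_div_mul_cancel hγ0.ne', rpow_one, hγ]
        congr 2
        field_simp
        ring

end Sums

section Kernel

variable {G : Type*} [AddGroup G] {k g : G → ℝ} {M : ℝ}

lemma tsum_add_comp_neg {h : G → ℝ} (hh : Summable h) :
    ∑' j, (h j + h (-j)) = 2 * ∑' j, h j := by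
  have hneg : Summable fun j => h (-j) := (Equiv.neg G).summable_iff.2 hh
  have hneg_eq : ∑' j, h (-j) = ∑' j, h j := (Equiv.neg G).tsum_eq h
  rw [hh.tsum_add hneg, hneg_eq, two_mul]

lemma rpow_abs_tsum_mul_le {δ : ℝ} (hδ : 0 < δ) (hk : ∀ j, 0 ≤ k j)
    (hsymm : ∀ j, k (-j) = k j) (hsum : Summable k) (hg : ∀ j, |g j| ≤ M)
    (hS : Summable fun j => k j ^ (1 - δ)) :
    |∑' j, k j * g j| ^ ((1 + δ) / δ) ≤
      (∑' j, k j ^ 2 * |g j + g (-j)| ^ ((1 + δ) / δ)) *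
        (∑' j, k j ^ (1 - δ)) ^ ((1 + δ) / δ - 1) := by
  have hkg := summable_mul_of_abs_le hk hsum hg
  have hsym : 2 * ∑' j, k j * g j = ∑' j, k j * (g j + g (-j)) := by
    rw [← tsum_add_comp_neg hkg]; simp only [hsymm, mul_add]
  have hs : ∀ j, |g j + g (-j)| ≤ 2 * M := fun j =>
    (abs_add_le _ _).trans (by linarith [hg j, hg (-j)])
  obtain ⟨hsumm, hHolder⟩ := summable_and_tsum_mul_abs_rpow_le hδ hk
    (summable_sq_mul_rpow_abs hk hsum hs (by positivity)) hS
  have habs : |∑' j, k j * g j| ≤ ∑' j, k j * |g j + g (-j)| := by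
    have hnorm : ∀ j, ‖k j * (g j + g (-j))‖ = k j * |g j + g (-j)| := fun j => by
      rw [norm_mul, Real.norm_of_nonneg (hk j), Real.norm_eq_abs]
    calc |∑' j, k j * g j| ≤ |2 * ∑' j, k j * g j| := by
          rw [abs_mul, abs_two]; linarith [abs_nonneg (∑' j, k j * g j)]
      _ = ‖∑' j, k j * (g j + g (-j))‖ := by rw [hsym, Real.norm_eq_abs]
      _ ≤ ∑' j, k j * |g j + g (-j)| := by
          simpa only [hnorm] using norm_tsum_le_tsum_norm (hsumm.congr fun j => (hnorm j).symm)
  exact (rpow_le_rpow (abs_nonneg _) habs (by positivity)).trans hHolder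

-- The summand of `Ψ_{2,Υ}(f)(x)`, written in the increments `g j = f (x + j) - f x`.
variable (k g) in
noncomputable def psi2Summand (j l : G) : ℝ :=
  k j * k l * exp (g l) * Ups (g (j + l) - g j - g l)

lemma psi2Summand_nonneg (hk : ∀ j, 0 ≤ k j) (j l : G) : 0 ≤ psi2Summand k g j l := by
  have := Ups_nonneg (g (j + l) - g j - g l)
  have := hk j; have := hk l
  unfold psi2Summand; positivity

lemma psi2Summand_le (hk : ∀ j, 0 ≤ k j) (hg : ∀ j, |g j| ≤ M) (j l : G) :
    psi2Summand k g j l ≤ exp (4 * M) * (k j * k l) := by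
  have hexp : exp (g l) ≤ exp M := exp_le_exp.2 (le_of_abs_le (hg l))
  have hUps : Ups (g (j + l) - g j - g l) ≤ exp (3 * M) := by
    refine (Ups_le_exp_abs _).trans (exp_le_exp.2 ?_)
    linarith [abs_sub (g (j + l) - g j) (g l), abs_sub (g (j + l)) (g j),
      hg (j + l), hg j, hg l]
  calc psi2Summand k g j l = k j * k l * (exp (g l) * Ups (g (j + l) - g j - g l)) := by
        unfold psi2Summand; ring
    _ ≤ k j * k l * (exp M * exp (3 * M)) := by
        have := hk j; have := hk l
        gcongr; exact Ups_nonneg _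
    _ = exp (4 * M) * (k j * k l) := by rw [← exp_add]; ring_nf

lemma summable_psi2Summand (hk : ∀ j, 0 ≤ k j) (hsum : Summable k) (hg : ∀ j, |g j| ≤ M)
    (j : G) : Summable (psi2Summand k g j) :=
  (hsum.mul_left (exp (4 * M) * k j)).of_nonneg_of_le (psi2Summand_nonneg hk j)
    fun l => (psi2Summand_le hk hg j l).trans_eq (by ring)

lemma summable_tsum_psi2Summand (hk : ∀ j, 0 ≤ k j) (hsum : Summable k)
    (hg : ∀ j, |g j| ≤ M) : Summable fun j => ∑' l, psi2Summand k g j l := by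
  refine (hsum.mul_left (exp (4 * M) * ∑' l, k l)).of_nonneg_of_le
    (fun j => tsum_nonneg (psi2Summand_nonneg hk j)) fun j => ?_
  calc ∑' l, psi2Summand k g j l ≤ ∑' l, exp (4 * M) * k j * k l :=
        (summable_psi2Summand hk hsum hg j).tsum_le_tsum
          (fun l => (psi2Summand_le hk hg j l).trans_eq (by ring)) (hsum.mul_left _)
    _ = exp (4 * M) * (∑' l, k l) * k j := by rw [tsum_mul_left]; ring

lemma psi2Summand_neg_right (hsymm : ∀ j, k (-j) = k j) (hg0 : g 0 = 0) (j : G) :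
    psi2Summand k g j (-j) = k j ^ 2 * exp (g (-j)) * Ups (-(g j + g (-j))) := by
  simp only [psi2Summand, add_neg_cancel, hg0, hsymm]
  ring_nf

lemma tsum_sq_mul_rpow_le_tsum_tsum_psi2Summand {γ C : ℝ} (hγ : 0 ≤ γ) (hC0 : 0 ≤ C)
    (hC : ∀ s : ℝ, |s| ^ γ ≤ C * (exp (s / 2) * Ups (-s)))
    (hk : ∀ j, 0 ≤ k j) (hsymm : ∀ j, k (-j) = k j) (hsum : Summable k)
    (hg : ∀ j, |g j| ≤ M) (hg0 : g 0 = 0) :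
    ∑' j, k j ^ 2 * |g j + g (-j)| ^ γ ≤ C * ∑' j, ∑' l, psi2Summand k g j l := by
  set D : G → ℝ := fun j => psi2Summand k g j (-j)
  have hdiag : ∑' j, D j ≤ ∑' j, ∑' l, psi2Summand k g j l :=
    tsum_le_tsum_tsum_of_nonneg (fun j => -j) (psi2Summand_nonneg hk)
      (summable_psi2Summand hk hsum hg) (summable_tsum_psi2Summand hk hsum hg)
  have hDsum : Summable D :=
    (summable_tsum_psi2Summand hk hsum hg).of_nonneg_of_le (fun j => psi2Summand_nonneg hk j _)
      fun j => (summable_psi2Summand hk hsum hg j).le_tsum _ fun l _ => psi2Summand_nonneg hk j l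
  have hpoint : ∀ j, k j ^ 2 * |g j + g (-j)| ^ γ ≤ C / 2 * (D j + D (-j)) := by
    intro j
    have hD : D j + D (-j) = k j ^ 2 * ((exp (g (-j)) + exp (g j)) * Ups (-(g j + g (-j)))) := by
      simp only [D, psi2Summand_neg_right hsymm hg0, neg_neg, hsymm, add_comm (g j)]
      ring
    have hU := Ups_nonneg (-(g j + g (-j)))
    have hAMGM : exp ((g j + g (-j)) / 2) ≤ (exp (g (-j)) + exp (g j)) / 2 := by
      rw [add_comm (g j)]; exact exp_half_add_le _ _
    rw [hD]
    calc k j ^ 2 * |g j + g (-j)| ^ γ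
        ≤ k j ^ 2 * (C * (exp ((g j + g (-j)) / 2) * Ups (-(g j + g (-j))))) := by
          gcongr; exact hC _
      _ ≤ k j ^ 2 * (C * ((exp (g (-j)) + exp (g j)) / 2 * Ups (-(g j + g (-j))))) := by
          gcongr
      _ = C / 2 * (k j ^ 2 * ((exp (g (-j)) + exp (g j)) * Ups (-(g j + g (-j))))) := by ring
  calc ∑' j, k j ^ 2 * |g j + g (-j)| ^ γ ≤ ∑' j, C / 2 * (D j + D (-j)) :=
        (summable_sq_mul_rpow_abs hk hsum (fun j => (abs_add_le _ _).trans
          (add_le_add (hg j) (hg (-j)))) hγ).tsum_le_tsum hpoint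
          ((hDsum.add ((Equiv.neg G).summable_iff.2 hDsum)).mul_left _)
    _ = C * ∑' j, D j := by rw [tsum_mul_left, tsum_add_comp_neg hDsum]; ring
    _ ≤ C * ∑' j, ∑' l, psi2Summand k g j l := by gcongr

end Kernel

theorem psi2_lower_bound_general (k : ℤ → ℝ) (δ : ℝ) (hδ : δ ∈ Set.Ioo (0 : ℝ) 1)
    (hknn : ∀ j : ℤ, 0 ≤ k j) (hsymm : ∀ j : ℤ, k (-j) = k j)
    (hsum : Summable k)
    (hδsum : Summable (fun n : ℕ => k (n : ℤ) ^ (1 - δ))) :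
    ∃ c > (0 : ℝ), ∀ f : ℤ → ℝ, (∃ M : ℝ, ∀ x : ℤ, |f x| ≤ M) → ∀ x : ℤ,
      c * |∑' j : ℤ, k j * (f (x + j) - f x)| ^ ((1 + δ) / δ)
        ≤ (1 / 2) * ∑' j : ℤ, ∑' l : ℤ, k j * k l * Real.exp (f (x + l) - f x)
            * Ups (f (x + j + l) - f (x + j) - f (x + l) + f x) := by
  set γ := (1 + δ) / δ with hγ
  have hγ2 : 2 ≤ γ := by rw [hγ, le_div_iff₀ hδ.1]; linarith [hδ.2]
  obtain ⟨C, hC0, hC⟩ := exists_rpow_abs_le_mul_exp_mul_Ups hγ2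
  have hS : Summable fun j : ℤ => k j ^ (1 - δ) :=
    .of_nat_of_neg hδsum (by simpa only [hsymm] using hδsum)
  set S := ∑' j : ℤ, k j ^ (1 - δ)
  have hS0 : 0 ≤ S := tsum_nonneg fun j => rpow_nonneg (hknn j) _
  -- `1 + S` rather than `S`, which vanishes when `k = 0`.
  refine ⟨(2 * C * (1 + S) ^ (γ - 1))⁻¹, by positivity, fun f ⟨M, hM⟩ x => ?_⟩
  set g : ℤ → ℝ := fun j => f (x + j) - f x
  have hg : ∀ j, |g j| ≤ 2 * M := fun j => (abs_sub _ _).trans (by linarith [hM (x + j), hM x])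
  have hΨ : ∑' j : ℤ, ∑' l : ℤ, k j * k l * exp (f (x + l) - f x)
      * Ups (f (x + j + l) - f (x + j) - f (x + l) + f x)
      = ∑' j, ∑' l, psi2Summand k g j l := by
    refine tsum_congr fun j => tsum_congr fun l => ?_
    simp only [psi2Summand, g, add_assoc]
    ring_nf
  set P := ∑' j, k j ^ 2 * |g j + g (-j)| ^ γ
  have hP0 : 0 ≤ P := tsum_nonneg fun j => by have := hknn j; positivity
  have hL : |∑' j, k j * g j| ^ γ ≤ P * S ^ (γ - 1) :=
    rpow_abs_tsum_mul_le hδ.1 hknn hsymm hsum hg hS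
  have hP : P ≤ C * ∑' j, ∑' l, psi2Summand k g j l :=
    tsum_sq_mul_rpow_le_tsum_tsum_psi2Summand (by positivity) hC0.le hC hknn hsymm hsum hg
      (by simp [g])
  rw [hΨ]
  calc (2 * C * (1 + S) ^ (γ - 1))⁻¹ * |∑' j, k j * g j| ^ γ
      ≤ (2 * C * (1 + S) ^ (γ - 1))⁻¹ * (P * (1 + S) ^ (γ - 1)) := by
        gcongr
        exact hL.trans (mul_le_mul_of_nonneg_left
          (rpow_le_rpow hS0 (le_add_of_nonneg_left zero_le_one) (by linarith)) hP0)
    _ = P / (2 * C) := by field_simp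
    _ ≤ 1 / 2 * ∑' j, ∑' l, psi2Summand k g j l := by
        rw [div_le_iff₀ (by positivity)]; linarith

/-- For a symmetric summable jump kernel `k` on `ℤ` with `Σ_{j∈ℕ} k(j)^{1-δ} < ∞` for some
`δ ∈ (0,1)`, there is `c > 0` such that `Ψ_{2,Υ}(f)(x) ≥ c |Lf(x)|^γ` with `γ = (1+δ)/δ`
for all bounded `f : ℤ → ℝ` and all `x ∈ ℤ`. -/
theorem psi2_lower_bound (k : ℤ → ℝ) (δ : ℝ) (hδ : δ ∈ Set.Ioo (0 : ℝ) 1)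
    (hknn : ∀ j : ℤ, 0 ≤ k j) (hk0 : k 0 = 0) (hsymm : ∀ j : ℤ, k (-j) = k j)
    (hsum : Summable k) (hkpos : 0 < ∑' j : ℤ, k j)
    (hδsum : Summable (fun n : ℕ => k (n : ℤ) ^ (1 - δ))) :
    ∃ c > (0 : ℝ), ∀ f : ℤ → ℝ, (∃ M : ℝ, ∀ x : ℤ, |f x| ≤ M) → ∀ x : ℤ,
      c * |∑' j : ℤ, k j * (f (x + j) - f x)| ^ ((1 + δ) / δ)
        ≤ (1 / 2) * ∑' j : ℤ, ∑' l : ℤ, k j * k l * Real.exp (f (x + l) - f x)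
            * Ups (f (x + j + l) - f (x + j) - f (x + l) + f x) :=
  psi2_lower_bound_general k δ hδ hknn hsymm hsum hδsum
end
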